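/- In the white component with initial state having f(t) = Empty (token at t deleted) and W to move, the sequence of moves v4→t (W), v2→v3 (B), x→v4 or y→v4 (W), v1→v2 (B), s→v1 (W) is a legal play, and at its end exactly one of the vertices x, y is empty while s is empty. -/

import Mathlib

/-- A token type: white tokens are moved by player W, black by player B. -/
inductive Tok | White | Black
deriving DecidableEq

/-- A configuration places at most one token on each vertex. -/
abbrev Config (V : Type) := V → Option Tok

/-- The opponent of a player. -/
def other : Tok → Tok
  | Tok.White => Tok.Black
  | Tok.Black => Tok.White

/-- A legal node-blocking move by player `p`: pick a token of type `p` at `u`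
and move it along an arc `(u,v)` to an unoccupied vertex `v`. -/
def legalMove {V : Type} [DecidableEq V] (E : V → V → Prop) (p : Tok)
    (f f' : Config V) : Prop :=
  ∃ u v, E u v ∧ f u = some p ∧ f v = none ∧
    f' = Function.update (Function.update f u none) v (some p)

/-- The configuration obtained by moving a token of type `p` from `u` to `v`. -/
def mv {V : Type} [DecidableEq V] (f : Config V) (u v : V) (p : Tok) : Config V :=
  Function.update (Function.update f u none) v (some p)

/-- Vertices of the white variable component. -/
inductive WV | s | t | x | y | v1 | v2 | v3 | v4
deriving DecidableEq

instance : Fintype WV where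
  elems := {WV.s, WV.t, WV.x, WV.y, WV.v1, WV.v2, WV.v3, WV.v4}
  complete := by intro a; cases a <;> decide

/-- Arcs of the white variable component. -/
def WE : WV → WV → Prop := fun a b =>
  (a, b) ∈ ([(WV.s, WV.v1), (WV.v1, WV.v2), (WV.v2, WV.v3), (WV.v3, WV.t),
    (WV.v4, WV.t), (WV.v4, WV.v2), (WV.x, WV.v4), (WV.y, WV.v4)] : List (WV × WV))

/-- Initial state of the white component with the token at `t` removed. -/
def wInit : Config WV := fun v =>
  match v with
  | WV.s => some Tok.White | WV.v4 => some Tok.White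
  | WV.x => some Tok.White | WV.y => some Tok.White
  | WV.v1 => some Tok.Black | WV.v2 => some Tok.Black
  | WV.v3 => none | WV.t => none

theorem legalMove_mv {V : Type} [DecidableEq V] {E : V → V → Prop} {p : Tok} {f : Config V}
    {u v : V} (huv : E u v) (hu : f u = some p) (hv : f v = none) :
    legalMove E p f (mv f u v p) :=
  ⟨u, v, huv, hu, hv, rfl⟩

instance : DecidableRel WE := fun _ _ => by unfold WE; infer_instance

/-- in the white component in initial state (t empty, W to move),
the play v4→t (W), v2→v3 (B), x→v4 or y→v4 (W), v1→v2 (B), s→v1 (W) is legal,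
and at its end `s` is empty and exactly one of `x`, `y` is empty. -/
theorem stmt_5 (z : WV) (hz : z = WV.x ∨ z = WV.y) :
    let f1 := mv wInit WV.v4 WV.t Tok.White
    let f2 := mv f1 WV.v2 WV.v3 Tok.Black
    let f3 := mv f2 z WV.v4 Tok.White
    let f4 := mv f3 WV.v1 WV.v2 Tok.Black
    let f5 := mv f4 WV.s WV.v1 Tok.White
    legalMove WE Tok.White wInit f1 ∧ legalMove WE Tok.Black f1 f2 ∧
    legalMove WE Tok.White f2 f3 ∧ legalMove WE Tok.Black f3 f4 ∧
    legalMove WE Tok.White f4 f5 ∧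
    f5 WV.s = none ∧ Xor' (f5 WV.x = none) (f5 WV.y = none) := by
  rcases hz with rfl | rfl <;>
    exact ⟨legalMove_mv (by decide) rfl rfl, legalMove_mv (by decide) rfl rfl,
      legalMove_mv (by decide) rfl rfl, legalMove_mv (by decide) rfl rfl,
      legalMove_mv (by decide) rfl rfl, rfl, by unfold Xor'; decide⟩
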